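/- Let e := exp(1), and define γ₀(x) := eˣ − 1 for x ∈ ℝ and γ₁(x) := 2e √(1 − e^{x−1}) for x ≤ 1. Then the set { x ∈ ℝ : x ≤ 1 and γ₀(x) = γ₁(x) } consists of exactly one point, namely x* = log( 2√(e(2e−1)) − (2e−1) ); moreover 0 < 2√(e(2e−1)) − (2e−1) < e (so x* < 1) and the common value is γ₀(x*) = 2√(e(2e−1)) − 2e. -/

import Mathlib

/-!
Put `T = eˣ`. For `x ≤ 1` the equation `T - 1 = 2e√(1 - T/e)` holds exactly when `T ≥ 1` and
`(T - 1)² = 4e(e - T)`. This quadratic has roots `2√(e(2e-1)) - (2e-1)` and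
`-2√(e(2e-1)) - (2e-1)`, and only the first is positive, so `x = log t*`.
-/

/-- The value t* = 2√(e(2e−1)) − (2e−1); the unique intersection point is x* = log t*. -/
noncomputable def tstar : ℝ :=
  2 * Real.sqrt (Real.exp 1 * (2 * Real.exp 1 - 1)) - (2 * Real.exp 1 - 1)

open Real

section PosRoot
variable {e T : ℝ}

lemma sub_one_eq_two_mul_mul_sqrt_iff (he : 0 < e) (hTe : T ≤ e) :
    T - 1 = 2 * e * √(1 - T / e) ↔ 1 ≤ T ∧ (T - 1) ^ 2 = 4 * e ^ 2 - 4 * e * T := by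
  have hrad : 0 ≤ 1 - T / e := by rw [sub_nonneg, div_le_one he]; exact hTe
  constructor
  · intro h
    refine ⟨by nlinarith [sqrt_nonneg (1 - T / e)], ?_⟩
    rw [h, mul_pow, sq_sqrt hrad]
    field_simp
    ring
  · rintro ⟨hT1, hsq⟩
    rw [← sqrt_sq (by linarith : 0 ≤ T - 1), hsq, show (2 * e) = √((2 * e) ^ 2) from
      (sqrt_sq (by linarith)).symm, ← sqrt_mul (by positivity)]
    congr 1
    field_simp
    ring

/-- The positive root of `(T - 1)² = 4e(e - T)`. -/
noncomputable def posRoot (e : ℝ) : ℝ := 2 * √(e * (2 * e - 1)) - (2 * e - 1)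

lemma tstar_eq_posRoot : tstar = posRoot (exp 1) := rfl

lemma sq_sqrt_mul_two_mul_sub_one (he : 1 / 2 ≤ e) : √(e * (2 * e - 1)) ^ 2 = 2 * e ^ 2 - e := by
  rw [sq_sqrt (by nlinarith)]; ring

lemma one_le_posRoot (he : 1 ≤ e) : 1 ≤ posRoot e := by
  have := sq_sqrt_mul_two_mul_sub_one (by linarith : 1 / 2 ≤ e)
  unfold posRoot
  nlinarith [sqrt_nonneg (e * (2 * e - 1))]

lemma posRoot_lt_self (he : 1 < e) : posRoot e < e := by
  have := sq_sqrt_mul_two_mul_sub_one (by linarith : 1 / 2 ≤ e)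
  unfold posRoot
  nlinarith [sqrt_nonneg (e * (2 * e - 1)), sq_nonneg (e - 1)]

lemma sub_one_sq_eq_iff_eq_posRoot (he : 1 ≤ e) (hT : 0 ≤ T) :
    1 ≤ T ∧ (T - 1) ^ 2 = 4 * e ^ 2 - 4 * e * T ↔ T = posRoot e := by
  have hs := sq_sqrt_mul_two_mul_sub_one (by linarith : 1 / 2 ≤ e)
  have hfactor : (T - 1) ^ 2 - (4 * e ^ 2 - 4 * e * T)
      = (T - posRoot e) * (T + 2 * √(e * (2 * e - 1)) + 2 * e - 1) := by
    unfold posRoot; linear_combination 4 * hs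
  constructor
  · rintro ⟨-, hsq⟩
    have hpos : 0 < T + 2 * √(e * (2 * e - 1)) + 2 * e - 1 := by
      nlinarith [sqrt_nonneg (e * (2 * e - 1))]
    have := (mul_eq_zero.mp (hfactor.symm.trans (sub_eq_zero.mpr hsq))).resolve_right hpos.ne'
    linarith
  · rintro rfl
    exact ⟨one_le_posRoot he, sub_eq_zero.mp (hfactor.trans (by ring))⟩

end PosRoot

/-- with γ₀(x) = eˣ − 1 and γ₁(x) = 2e√(1 − e^{x−1}) (for x ≤ 1), the set of
points x ≤ 1 with γ₀(x) = γ₁(x) is exactly {log t*}, where 0 < t* < e (so log t* < 1), and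
the common value is γ₀(log t*) = 2√(e(2e−1)) − 2e. -/
theorem stmt_18 :
    {x : ℝ | x ≤ 1 ∧ Real.exp x - 1 = 2 * Real.exp 1 * Real.sqrt (1 - Real.exp (x - 1))}
        = {Real.log tstar} ∧
    (0 < tstar ∧ tstar < Real.exp 1) ∧
    Real.exp (Real.log tstar) - 1
        = 2 * Real.sqrt (Real.exp 1 * (2 * Real.exp 1 - 1)) - 2 * Real.exp 1 := by
  have he : 1 < exp 1 := one_lt_exp_iff.mpr one_pos
  have htpos : 0 < tstar := one_pos.trans_le (one_le_posRoot he.le)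
  have hte : tstar < exp 1 := posRoot_lt_self he
  refine ⟨?_, ⟨htpos, hte⟩, ?_⟩
  · ext x
    have hmem : (x ≤ 1 ∧ exp x - 1 = 2 * exp 1 * √(1 - exp (x - 1))) ↔ x ≤ 1 ∧ exp x = tstar :=
      and_congr_right fun hx ↦ by
        rw [exp_sub, sub_one_eq_two_mul_mul_sqrt_iff (exp_pos 1) (exp_le_exp.mpr hx),
          sub_one_sq_eq_iff_eq_posRoot he.le (exp_pos x).le, tstar_eq_posRoot]
    rw [Set.mem_ofPred_eq, Set.mem_singleton_iff, hmem]
    constructor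
    · rintro ⟨-, hx⟩
      rw [← hx, log_exp]
    · rintro rfl
      exact ⟨(log_le_iff_le_exp htpos).mpr hte.le, exp_log htpos⟩
  · rw [exp_log htpos, tstar]; ring
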